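/- arXiv:1412.2540 — 3 statements merged into one kernel-verified Lean document; each statement's English description precedes it below -/
import Mathlib

section
/- Let (x,f) ∼ (x',f') denote the relation that f_{i,i+1} ≤ f'_{i,i+1} for all i = 0,…,n together with flow balance at every node. Assume the rate conditions: (a) x_1 ≥ x'_1 ⟹ λ(x) ≤ λ'(x'); (b) x_i ≤ x'_i and x_{i+1} ≥ x'_{i+1} ⟹ μ_i(x) ≤ μ'_i(x') for 1 ≤ i ≤ n−1; (c) x_n ≤ x'_n ⟹ μ_n(x) ≤ μ'_n(x'). Then the set of ∼-related pairs is absorbing for the marching soldiers coupling of the state–flow processes: every transition of the coupling with strictly positive rate maps a ∼-related pair to a ∼-related pair. -/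
/-- Effect on the population vector of a transition over link `j` of the open
linear network with links `(0,1),…,(n−1,n),(n,0)` (nodes 0-based in `Fin n`,
links indexed by `Fin (n+1)`: link `j` goes from node `j−1` to node `j`,
where "node `−1`" and "node `n`" are the outside world): one job is added at
node `j` (if it exists) and removed from node `j−1` (if it exists). -/
def stepX (n : ℕ) (j : Fin (n + 1)) (x : Fin n → ℤ) : Fin n → ℤ :=
  fun k => x k + (if (j : ℕ) = (k : ℕ) then 1 else 0)
             - (if (j : ℕ) = (k : ℕ) + 1 then 1 else 0)

/-- Effect on the flow counters of a transition over link `j`. -/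
def stepF (n : ℕ) (j : Fin (n + 1)) (f : Fin (n + 1) → ℤ) : Fin (n + 1) → ℤ :=
  fun l => f l + (if l = j then 1 else 0)

/-- The relation `(x,f) ∼ (x',f')`: all flow counters are ordered,
`f_{i,i+1} ≤ f'_{i,i+1}`, and flow balance holds at every node. -/
def FlowRel (n : ℕ) (x : Fin n → ℤ) (f : Fin (n + 1) → ℤ)
    (x' : Fin n → ℤ) (f' : Fin (n + 1) → ℤ) : Prop :=
  (∀ j : Fin (n + 1), f j ≤ f' j) ∧
  (∀ i : Fin n, x i - f i.castSucc + f i.succ = x' i - f' i.castSucc + f' i.succ)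

/-!
Flow balance reads `x i - x' i = (f' - f) (out of i) - (f' - f) (into i)`, and
`f ≤ f'` makes both differences nonnegative. So when the counters agree on link
`j`, the node upstream of `j` has `x ≤ x'` and the node downstream has `x' ≤ x`;
the rate conditions then give `r j x ≤ r' j x'`, i.e. a solitary move of the
first process over `j`, the only move that could break `f j ≤ f' j`, has
positive rate only when `f j < f' j`. Every move preserves flow balance.
-/

theorem stepX_sub_stepF_add_stepF {n : ℕ} (j : Fin (n + 1)) (y : Fin n → ℤ)
    (g : Fin (n + 1) → ℤ) (i : Fin n) :
    stepX n j y i - stepF n j g i.castSucc + stepF n j g i.succ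
      = y i - g i.castSucc + g i.succ := by
  simp only [stepX, stepF, Fin.ext_iff, Fin.val_castSucc, Fin.val_succ]
  split_ifs <;> omega

namespace FlowRel

variable {n : ℕ} {x x' : Fin n → ℤ} {f f' : Fin (n + 1) → ℤ}

theorem le_of_inflow_eq (h : FlowRel n x f x' f') {i : Fin n}
    (hi : f i.castSucc = f' i.castSucc) : x' i ≤ x i := by
  have := h.2 i
  have := h.1 i.succ
  omega

theorem le_of_outflow_eq (h : FlowRel n x f x' f') {i : Fin n}
    (hi : f i.succ = f' i.succ) : x i ≤ x' i := by
  have := h.2 i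
  have := h.1 i.castSucc
  omega

theorem step_both (h : FlowRel n x f x' f') (j : Fin (n + 1)) :
    FlowRel n (stepX n j x) (stepF n j f) (stepX n j x') (stepF n j f') :=
  ⟨fun l => add_le_add_left (h.1 l) _,
    fun i => by rw [stepX_sub_stepF_add_stepF, stepX_sub_stepF_add_stepF]; exact h.2 i⟩

theorem step_left (h : FlowRel n x f x' f') {j : Fin (n + 1)} (hj : f j < f' j) :
    FlowRel n (stepX n j x) (stepF n j f) x' f' := by
  refine ⟨fun l => ?_, fun i => by rw [stepX_sub_stepF_add_stepF]; exact h.2 i⟩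
  simp only [stepF]
  split_ifs with hl
  · subst hl; omega
  · simpa using h.1 l

theorem step_right (h : FlowRel n x f x' f') (j : Fin (n + 1)) :
    FlowRel n x f (stepX n j x') (stepF n j f') := by
  refine ⟨fun l => ?_, fun i => by rw [stepX_sub_stepF_add_stepF]; exact h.2 i⟩
  simp only [stepF]
  have := h.1 l
  split_ifs <;> omega

theorem rate_le_of_eq (h : FlowRel n x f x' f') (hn : 0 < n)
    {r r' : Fin (n + 1) → (Fin n → ℤ) → ℝ}
    (ha : x' ⟨0, hn⟩ ≤ x ⟨0, hn⟩ → r 0 x ≤ r' 0 x')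
    (hb : ∀ (j : Fin (n + 1)), 0 < (j : ℕ) → ∀ hjn : (j : ℕ) < n,
        x ⟨(j : ℕ) - 1, Nat.sub_lt_of_lt hjn⟩ ≤ x' ⟨(j : ℕ) - 1, Nat.sub_lt_of_lt hjn⟩ →
        x' ⟨(j : ℕ), hjn⟩ ≤ x ⟨(j : ℕ), hjn⟩ → r j x ≤ r' j x')
    (hc : x ⟨n - 1, Nat.sub_one_lt_of_lt hn⟩ ≤ x' ⟨n - 1, Nat.sub_one_lt_of_lt hn⟩ →
        r (Fin.last n) x ≤ r' (Fin.last n) x')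
    {j : Fin (n + 1)} (hj : f j = f' j) : r j x ≤ r' j x' := by
  rcases Nat.eq_zero_or_pos (j : ℕ) with hj0 | hj0
  · obtain rfl : j = 0 := Fin.ext hj0
    exact ha (h.le_of_inflow_eq hj)
  rcases Nat.lt_or_ge (j : ℕ) n with hjn | hjn
  · have hup : (⟨(j : ℕ) - 1, by omega⟩ : Fin n).succ = j := Fin.ext (by simp; omega)
    have hdown : (⟨(j : ℕ), hjn⟩ : Fin n).castSucc = j := Fin.ext rfl
    exact hb j hj0 hjn (h.le_of_outflow_eq (by rwa [hup])) (h.le_of_inflow_eq (by rwa [hdown]))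
  · obtain rfl : j = Fin.last n := Fin.ext (by simp; omega)
    have hup : (⟨n - 1, by omega⟩ : Fin n).succ = Fin.last n := Fin.ext (by simp; omega)
    exact hc (h.le_of_outflow_eq (by rwa [hup]))

end FlowRel

/-- Absorbing-set lemma for the marching soldiers coupling of the state–flow
processes of two open linear networks.  The rates are combined into
`r, r' : Fin (n+1) → state → ℝ` with `r 0 = λ` and `r j = μ_j` for
`1 ≤ j ≤ n`.  Under the rate conditions (a) `x₁ ≥ x'₁ ⟹ λ(x) ≤ λ'(x')`,
(b) `x_i ≤ x'_i ∧ x_{i+1} ≥ x'_{i+1} ⟹ μ_i(x) ≤ μ'_i(x')` for internal `i`,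
and (c) `x_n ≤ x'_n ⟹ μ_n(x) ≤ μ'_n(x')`, every transition of the coupling
with strictly positive rate (joint moves at rate `min`, solitary moves at
the rate excesses) maps a `∼`-related pair to a `∼`-related pair. -/
theorem stmt7 (n : ℕ) (hn : 0 < n)
    (S S' : Set (Fin n → ℤ))
    (r r' : Fin (n + 1) → (Fin n → ℤ) → ℝ)
    -- (a)
    (ha : ∀ x ∈ S, ∀ x' ∈ S', x' ⟨0, hn⟩ ≤ x ⟨0, hn⟩ → r 0 x ≤ r' 0 x')
    -- (b)
    (hb : ∀ (j : Fin (n + 1)) (hj0 : 0 < (j : ℕ)) (hjn : (j : ℕ) < n),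
      ∀ x ∈ S, ∀ x' ∈ S',
        x ⟨(j : ℕ) - 1, by omega⟩ ≤ x' ⟨(j : ℕ) - 1, by omega⟩ →
        x' ⟨(j : ℕ), hjn⟩ ≤ x ⟨(j : ℕ), hjn⟩ →
        r j x ≤ r' j x')
    -- (c)
    (hc : ∀ x ∈ S, ∀ x' ∈ S',
      x ⟨n - 1, by omega⟩ ≤ x' ⟨n - 1, by omega⟩ →
      r (Fin.last n) x ≤ r' (Fin.last n) x')
    (x x' : Fin n → ℤ) (hx : x ∈ S) (hx' : x' ∈ S')
    (f f' : Fin (n + 1) → ℤ)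
    (hrel : FlowRel n x f x' f') :
    ∀ j : Fin (n + 1),
      (0 < min (r j x) (r' j x') →
        FlowRel n (stepX n j x) (stepF n j f) (stepX n j x') (stepF n j f')) ∧
      (r' j x' < r j x →
        FlowRel n (stepX n j x) (stepF n j f) x' f') ∧
      (r j x < r' j x' →
        FlowRel n x f (stepX n j x') (stepF n j f')) := by
  intro j
  refine ⟨fun _ => hrel.step_both j, fun hr => hrel.step_left ?_,
    fun _ => hrel.step_right j⟩
  refine (hrel.1 j).lt_of_ne fun hj => hr.not_ge ?_
  exact hrel.rate_le_of_eq hn (ha x hx x' hx') (fun j hj0 hjn => hb j hj0 hjn x hx x' hx')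
    (hc x hx x' hx') hj
end

section
/- (Theorem 2, absorbing-set form.) Assume that for all x ∈ S, x' ∈ S' with x ≤ x' coordinatewise: (a) x_1 = x'_1 implies λ(x) ≤ λ'(x') and μ_1(x) ≥ μ'_1(x'); (b) for each 2 ≤ i ≤ n, x_i = x'_i implies μ_{i−1}(x) ≤ μ'_{i−1}(x') and μ_i(x) ≥ μ'_i(x'). Then the set {(x,x') : x ≤ x'} is absorbing for the marching soldiers coupling of the two linear-network population processes: every coupled transition with positive rate preserves the coordinatewise order. -/
/-- (Theorem 2, absorbing-set form.)  Rates are combined into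
`r, r' : Fin (n+1) → state → ℝ` with `r 0 = λ` and `r j = μ_j` for
`1 ≤ j ≤ n`.  Assume that for all `x ∈ S`, `x' ∈ S'` with `x ≤ x'`
coordinatewise: (a) `x₁ = x'₁` implies `λ(x) ≤ λ'(x')` and
`μ₁(x) ≥ μ'₁(x')`; (b) for `2 ≤ i ≤ n`, `x_i = x'_i` implies
`μ_{i−1}(x) ≤ μ'_{i−1}(x')` and `μ_i(x) ≥ μ'_i(x')`.  Then the set
`{(x,x') : x ≤ x'}` is absorbing for the marching soldiers coupling: every
coupled transition with positive rate (joint moves at rate `min`, solitary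
moves at the rate excesses) preserves the coordinatewise order. -/
theorem stmt10 (n : ℕ) (hn : 0 < n)
    (S S' : Set (Fin n → ℤ))
    (r r' : Fin (n + 1) → (Fin n → ℤ) → ℝ)
    -- (a)
    (ha : ∀ x ∈ S, ∀ x' ∈ S', x ≤ x' → x ⟨0, hn⟩ = x' ⟨0, hn⟩ →
      r 0 x ≤ r' 0 x' ∧ r' ⟨1, by omega⟩ x' ≤ r ⟨1, by omega⟩ x)
    -- (b), with `k = i − 1` the 0-based index of node `i`, `2 ≤ i ≤ n`:
    (hb : ∀ (k : ℕ) (hk1 : 1 ≤ k) (hkn : k < n),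
      ∀ x ∈ S, ∀ x' ∈ S', x ≤ x' → x ⟨k, hkn⟩ = x' ⟨k, hkn⟩ →
        r ⟨k, by omega⟩ x ≤ r' ⟨k, by omega⟩ x' ∧
        r' ⟨k + 1, by omega⟩ x' ≤ r ⟨k + 1, by omega⟩ x)
    (x x' : Fin n → ℤ) (hx : x ∈ S) (hx' : x' ∈ S') (hord : x ≤ x') :
    ∀ j : Fin (n + 1),
      (0 < min (r j x) (r' j x') → stepX n j x ≤ stepX n j x') ∧
      (r' j x' < r j x → stepX n j x ≤ x') ∧
      (r j x < r' j x' → x ≤ stepX n j x') := by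
  intro j
  refine ⟨fun _ k => ?_, fun hgt k => ?_, fun hlt k => ?_⟩
  · have h : x k ≤ x' k := hord k
    simp only [stepX]; split_ifs <;> omega
  · have h : x k ≤ x' k := hord k
    simp only [stepX]
    by_cases h1 : (j : ℕ) = (k : ℕ)
    · have hk : x k < x' k := by
        by_contra hc
        have heq : x k = x' k := le_antisymm h (not_lt.mp hc)
        rcases Nat.eq_zero_or_pos k.val with h0 | hpos
        · have hk0 : k = ⟨0, hn⟩ := Fin.ext h0
          have hj0 : j = 0 := Fin.ext (by simp [h1, h0])
          have := (ha x hx x' hx' hord (by rw [← hk0]; exact heq)).1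
          rw [hj0] at hgt
          linarith
        · have hkn : (k : ℕ) < n := k.isLt
          have hj : j = ⟨(k : ℕ), by omega⟩ := Fin.ext h1
          have hke : (⟨(k : ℕ), hkn⟩ : Fin n) = k := Fin.ext rfl
          have := (hb (k : ℕ) hpos hkn x hx x' hx' hord (by rw [hke]; exact heq)).1
          rw [hj] at hgt
          linarith
      split_ifs <;> omega
    · split_ifs <;> omega
  · have h : x k ≤ x' k := hord k
    simp only [stepX]
    by_cases h1 : (j : ℕ) = (k : ℕ) + 1
    · have hk : x k < x' k := by
        by_contra hc
        have heq : x k = x' k := le_antisymm h (not_lt.mp hc)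
        rcases Nat.eq_zero_or_pos k.val with h0 | hpos
        · have hk0 : k = ⟨0, hn⟩ := Fin.ext h0
          have hj1 : j = ⟨1, by omega⟩ := Fin.ext (by simp [h1, h0])
          have := (ha x hx x' hx' hord (by rw [← hk0]; exact heq)).2
          rw [hj1] at hlt
          linarith
        · have hkn : (k : ℕ) < n := k.isLt
          have hj : j = ⟨(k : ℕ) + 1, by omega⟩ := Fin.ext h1
          have hke : (⟨(k : ℕ), hkn⟩ : Fin n) = k := Fin.ext rfl
          have := (hb (k : ℕ) hpos hkn x hx x' hx' hord (by rw [hke]; exact heq)).2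
          rw [hj] at hlt
          linarith
      split_ifs <;> omega
    · split_ifs <;> omega
end

section
/- The tandem queue systems are not coordinatewise comparable: condition (b) of the population-ordering theorem fails for the pair (balanced ≤ original) because μ₂(x) < μ'₂(x') when x = x' with x₁ = s₁ and 0 < x₂ < s₂ and δ₂(x₂) > 0; and condition (a) fails for the reversed pair (original ≤ balanced) because λ'(x') > λ(x) when x'₁ = x₁ < s₁, x'₂ < x₂ = s₂, and β > 0. -/
/-- The two tandem queue systems are not coordinatewise comparable.
Condition (b) of the population-ordering theorem fails for the pair
(balanced ≤ original): `μ₂(x) < μ'₂(x')` when `x = x'` with `x₁ = s₁`,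
`0 < x₂ < s₂` and `δ₂(x₂) > 0`.  Condition (a) fails for the reversed pair
(original ≤ balanced): `λ'(x') > λ(x)` when `x'₁ = x₁ < s₁` and
`x'₂ < x₂ = s₂` (with `β > 0`).  Balanced rates:
`λ(x) = β·1(x₁<s₁, x₂<s₂)`, `μ₂(x) = δ₂(x₂)·1(x₁<s₁)`; original rates:
`λ'(x) = β·1(x₁<s₁)`, `μ'₂(x) = δ₂(x₂)`. -/
theorem stmt12 (s1 s2 : ℕ) (hs1 : 1 ≤ s1) (hs2 : 1 ≤ s2)
    (β : ℝ) (hβ : 0 < β)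
    (δ1 δ2 : ℕ → ℝ) (hδ1 : Monotone δ1) (hδ2 : Monotone δ2) :
    (∀ x : ℕ × ℕ, x.1 = s1 → 0 < x.2 → x.2 < s2 → 0 < δ2 x.2 →
      (if x.1 < s1 then δ2 x.2 else 0) < δ2 x.2) ∧
    (∀ x x' : ℕ × ℕ, x'.1 = x.1 → x.1 < s1 → x'.2 < x.2 → x.2 = s2 →
      (if x.1 < s1 ∧ x.2 < s2 then β else 0) < (if x'.1 < s1 then β else 0)) := by
  constructor
  · intro x h1 _ _ hpos
    simp [h1, hpos]
  · intro x x' h1 h2 _ h4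
    simp [h1, h2, h4, hβ]
end
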